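/- Shape-independent fixed-point approximation: let ⪯ be an estimator on the flow monoid, let s, t, u be flow graphs with s ⪯ctx t and s ⋆ u defined. Then there exist inflows in_t and in_u with s.in ⪯^{u.X} in_t and u.in ⪯^{s.X} in_u such that t ⌢ u = t[in_t] ⋆ u[in_u] (the multiplication on the right being defined) and s ⋆ u ⪯ctx t ⌢ u. -/

import Mathlib

universe u

/-- A flow monoid: a commutative monoid whose natural order
(`m ≤ n ↔ ∃ o, n = m + o`) is a partial order that forms an ω-cpo, with
continuous addition. `csup` assigns to every ascending chain its join. -/
class FlowMonoid (M : Type u) extends AddCommMonoid M, PartialOrder M, IsOrderedAddMonoid M,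
    CanonicallyOrderedAdd M, OrderBot M where
  /-- The join of an ascending chain. -/
  csup : (ℕ → M) → M
  isLUB_csup : ∀ K : ℕ → M, Monotone K → IsLUB (Set.range K) (csup K)
  add_csup : ∀ (n : M) (K : ℕ → M), Monotone K → n + csup K = csup fun i => n + K i

variable {M : Type u} [FlowMonoid M]

/-- Continuity: `f` commutes with joins of ascending chains. -/
def FMCont (f : M → M) : Prop :=
  ∀ K : ℕ → M, Monotone K →
    IsLUB (Set.range fun i => f (K i)) (f (FlowMonoid.csup K))

/-- A flow graph: a finite set of nodes `X ⊆ ℕ`, continuous edge functions, and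
a finitely supported inflow from sources outside `X` into `X`. (The edge
functions of sources outside `X` and the inflow outside its domain are
canonically zero.) -/
structure FlowGraph (M : Type u) [FlowMonoid M] where
  /-- The nodes. -/
  X : Finset ℕ
  /-- The edge functions: `E x y` labels the edge from `x` to `y`. -/
  E : ℕ → ℕ → M → M
  /-- The inflow: `inflow y x` is the flow the graph receives at `x ∈ X` from the
  external node `y ∉ X`. -/
  inflow : ℕ → ℕ → M
  econt : ∀ x y, x ∈ X → FMCont (E x y)
  edom : ∀ x y, x ∉ X → E x y = fun _ => 0
  inflow_fin : ∀ x, (Function.support fun y => inflow y x).Finite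
  inflow_dom : ∀ y x, inflow y x ≠ 0 → y ∉ X ∧ x ∈ X

namespace FlowGraph

/-- One step of the flow fixed-point computation, with inflow `i`. -/
noncomputable def stepWith (h : FlowGraph M) (i : ℕ → ℕ → M) (c : ℕ → M) : ℕ → M :=
  fun x => if x ∈ h.X then (∑ᶠ y, i y x) + ∑ y ∈ h.X, h.E y x (c y) else 0

/-- The flow for a custom inflow `i`, obtained by Kleene iteration: the least
function satisfying the flow equation. -/
noncomputable def flowWith (h : FlowGraph M) (i : ℕ → ℕ → M) : ℕ → M :=
  fun x => FlowMonoid.csup fun n => (h.stepWith i)^[n] (fun _ => 0) x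

/-- The flow of a flow graph. -/
noncomputable def flow (h : FlowGraph M) : ℕ → M := h.flowWith h.inflow

/-- The outflow of a flow graph: `out x y = E x y (flow x)`. -/
noncomputable def out (h : FlowGraph M) (x y : ℕ) : M := h.E x y (h.flow x)

/-- The transfer function: maps an inflow `i` to the resulting outflow at `y`. -/
noncomputable def tf (h : FlowGraph M) (i : ℕ → ℕ → M) (y : ℕ) : M :=
  ∑ x ∈ h.X, h.E x y (h.flowWith i x)

/-- The ghost multiplication of flow graphs: disjoint union of the node sets and
edges; the inflow of each component is restricted to sources outside the other. -/
def gmul (s t : FlowGraph M) : FlowGraph M where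
  X := s.X ∪ t.X
  E := fun x y => if x ∈ s.X then s.E x y else t.E x y
  inflow := fun y x => if y ∈ s.X ∪ t.X then 0 else s.inflow y x + t.inflow y x
  econt := by
    intro x y hx
    try dsimp only
    by_cases hs : x ∈ s.X
    · rw [if_pos hs]; exact s.econt x y hs
    · rw [if_neg hs]
      rcases Finset.mem_union.mp hx with h | h
      · exact absurd h hs
      · exact t.econt x y h
  edom := by
    intro x y hx
    try dsimp only
    rw [if_neg fun h => hx (Finset.mem_union_left _ h)]
    exact t.edom x y fun h => hx (Finset.mem_union_right _ h)
  inflow_fin := by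
    intro x
    refine Set.Finite.subset ((s.inflow_fin x).union (t.inflow_fin x)) ?_
    intro y hy
    rw [Function.mem_support] at hy
    try dsimp only at hy
    by_cases hmem : y ∈ s.X ∪ t.X
    · rw [if_pos hmem] at hy; exact absurd rfl hy
    · rw [if_neg hmem] at hy
      by_cases h1 : s.inflow y x = 0
      · have h2 : t.inflow y x ≠ 0 := fun h2 => hy (by rw [h1, h2, add_zero])
        exact Set.mem_union_right _ (Function.mem_support.mpr h2)
      · exact Set.mem_union_left _ (Function.mem_support.mpr h1)
  inflow_dom := by
    intro y x hy
    try dsimp only at hy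
    by_cases hmem : y ∈ s.X ∪ t.X
    · rw [if_pos hmem] at hy; exact absurd rfl hy
    · rw [if_neg hmem] at hy
      refine ⟨hmem, ?_⟩
      by_cases h1 : s.inflow y x = 0
      · have h2 : t.inflow y x ≠ 0 := fun h2 => hy (by rw [h1, h2, add_zero])
        exact Finset.mem_union_right _ (t.inflow_dom y x h2).2
      · exact Finset.mem_union_left _ (s.inflow_dom y x h1).2

/-- Definedness of the multiplication `s ⋆ t` of flow graphs: the ghost
multiplication is defined, the inflow expectation of each graph at the mutual
boundary matches the outflow of the other, and the flows are preserved in the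
composition (whose result is then `gmul s t`). -/
def MDef (s t : FlowGraph M) : Prop :=
  Disjoint s.X t.X ∧
  (∀ x ∈ s.X, ∀ y ∈ t.X, s.out x y = t.inflow x y ∧ t.out y x = s.inflow y x) ∧
  (∀ x ∈ s.X, (gmul s t).flow x = s.flow x) ∧
  (∀ y ∈ t.X, (gmul s t).flow y = t.flow y)

end FlowGraph

/-- An estimator on the flow monoid: a precongruence that is stable under joins
of ascending chains and over which the edge functions (i.e. the continuous
functions) are monotonic. -/
def IsEstimator (r : M → M → Prop) : Prop :=
  -- (E1) reflexive and transitive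
  (∀ m : M, r m m) ∧
  (∀ m n o : M, r m n → r n o → r m o) ∧
  -- (E2) compatible with addition
  (∀ m n o : M, r m n → r (m + o) (n + o)) ∧
  -- (E3) stable under joins of ascending chains
  (∀ K L : ℕ → M, Monotone K → Monotone L → (∀ i, r (K i) (L i)) →
    r (FlowMonoid.csup K) (FlowMonoid.csup L)) ∧
  -- (E4) edge functions are monotonic
  (∀ f : M → M, FMCont f → ∀ m n : M, r m n → r (f m) (f n))

/-- The estimator induced on flow graphs: same nodes, same inflow, and the
transfer functions are related for every smaller inflow. -/
def ctxLe (r : M → M → Prop) (s₁ s₂ : FlowGraph M) : Prop :=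
  s₁.X = s₂.X ∧ s₁.inflow = s₂.inflow ∧
  ∀ i : ℕ → ℕ → M, (∀ y x, i y x ≤ s₁.inflow y x) →
    ∀ y, y ∉ s₁.X → r (s₁.tf i y) (s₂.tf i y)

/-- `inflowLe r Y X i₁ i₂` is the relation `i₁ ⪯^Y i₂` on inflows over node set
`X`: the inflows agree on all sources outside `Y`, and for each target the sums
of the contributions from `Y` are related by `r`. -/
def inflowLe (r : M → M → Prop) (Y X : Finset ℕ) (i₁ i₂ : ℕ → ℕ → M) : Prop :=
  (∀ y, y ∉ Y → ∀ x, i₁ y x = i₂ y x) ∧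
  (∀ x ∈ X, r (∑ y ∈ Y, i₁ y x) (∑ y ∈ Y, i₂ y x))

/-!
On the nodes of `a`, the flow of `a ⌢ b` is the flow of `a` under the inflow that `b` sends it.
Hence `t ⌢ u = t[in_t] ⋆ u[in_u]` when `in_t` and `in_u` are the mutual outflows in the flow of
`t ⌢ u`, and the inflow comparisons reduce to comparing the flows of `s ⋆ u` and `t ⌢ u`.

Both flows are limits of Gauss–Seidel iterations: a sweep solves `s` (resp. `t`) exactly for the
inflow that the current flow on `u` sends it, then solves `u` for the resulting outflow. A sweep
sees `s` and `t` only through their transfer functions, at inflows bounded by `s.in` (the iterates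
stay below the flow of `s ⋆ u`, which on `u` is the flow of `u`), so `s ⪯ctx t` keeps the iterates
related by `⪯`, and (E3) passes this to the limits.
-/

attribute [ext] FlowGraph

namespace FlowMonoid

theorem le_csup {K : ℕ → M} (hK : Monotone K) (n : ℕ) : K n ≤ csup K :=
  (isLUB_csup K hK).1 ⟨n, rfl⟩

theorem csup_le {K : ℕ → M} (hK : Monotone K) {m : M} (h : ∀ n, K n ≤ m) : csup K ≤ m :=
  (isLUB_csup K hK).2 (by rintro _ ⟨n, rfl⟩; exact h n)

theorem csup_const (m : M) : csup (fun _ : ℕ => m) = m :=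
  le_antisymm (csup_le monotone_const fun _ => le_rfl) (le_csup monotone_const 0)

theorem csup_mono {K L : ℕ → M} (hK : Monotone K) (hL : Monotone L) (h : ∀ n, K n ≤ L n) :
    csup K ≤ csup L :=
  csup_le hK fun n => (h n).trans (le_csup hL n)

theorem csup_succ {K : ℕ → M} (hK : Monotone K) : csup (fun n => K (n + 1)) = csup K :=
  have hK' : Monotone fun n => K (n + 1) := hK.comp fun _ _ h => Nat.succ_le_succ h
  le_antisymm (csup_le hK' fun n => le_csup hK (n + 1)) (csup_mono hK hK' fun n => hK n.le_succ)

theorem csup_add_csup {K L : ℕ → M} (hK : Monotone K) (hL : Monotone L) :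
    csup K + csup L = csup fun n => K n + L n := by
  have hKL : Monotone fun n => K n + L n := fun _ _ h => add_le_add (hK h) (hL h)
  refine le_antisymm ?_ (csup_le hKL fun n => add_le_add (le_csup hK n) (le_csup hL n))
  rw [add_csup _ L hL]
  refine csup_le (fun _ _ h => add_le_add_right (hL h) _) fun n => ?_
  rw [add_comm, add_csup _ K hK]
  refine csup_le (fun _ _ h => add_le_add_right (hK h) _) fun m => ?_
  calc L n + K m ≤ K (max n m) + L (max n m) := by
        rw [add_comm]; exact add_le_add (hK (le_max_right n m)) (hL (le_max_left n m))
    _ ≤ _ := le_csup hKL (max n m)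

theorem sum_csup {ι : Type*} (S : Finset ι) (K : ι → ℕ → M) (hK : ∀ y ∈ S, Monotone (K y)) :
    ∑ y ∈ S, csup (K y) = csup fun n => ∑ y ∈ S, K y n := by
  classical
  induction S using Finset.induction_on with
  | empty => simp [csup_const]
  | insert a S ha ih =>
    have hS : ∀ y ∈ S, Monotone (K y) := fun y hy => hK y (Finset.mem_insert_of_mem hy)
    simp only [Finset.sum_insert ha]
    rw [ih hS, csup_add_csup (hK a (Finset.mem_insert_self a S))
      fun _ _ h => Finset.sum_le_sum fun y hy => hS y hy h]

end FlowMonoid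

open FlowMonoid

theorem FMCont.monotone {f : M → M} (hf : FMCont f) : Monotone f := by
  intro a b hab
  let K : ℕ → M := fun n => if n = 0 then a else b
  have hK : Monotone K := monotone_nat_of_le_succ fun n => by
    rcases n with _ | n <;> simp [K, hab]
  have hKb : csup K = b :=
    le_antisymm (csup_le hK fun n => by rcases n with _ | n <;> simp [K, hab]) (le_csup hK 1)
  simpa [K, hKb] using (hf K hK).1 ⟨0, rfl⟩

theorem FMCont.map_csup {f : M → M} (hf : FMCont f) {K : ℕ → M} (hK : Monotone K) :
    f (csup K) = csup fun n => f (K n) :=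
  (hf K hK).unique (isLUB_csup _ (hf.monotone.comp hK))

namespace IsEstimator

variable {r : M → M → Prop}

theorem refl (hr : IsEstimator r) (m : M) : r m m := hr.1 m

theorem trans (hr : IsEstimator r) {m n o : M} (hmn : r m n) (hno : r n o) : r m o :=
  hr.2.1 m n o hmn hno

theorem add (hr : IsEstimator r) {m n o p : M} (hmn : r m n) (hop : r o p) :
    r (m + o) (n + p) :=
  hr.trans (hr.2.2.1 m n o hmn) (by rw [add_comm n, add_comm n]; exact hr.2.2.1 o p n hop)

theorem sum (hr : IsEstimator r) {ι : Type*} (S : Finset ι) {f g : ι → M}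
    (h : ∀ x ∈ S, r (f x) (g x)) : r (∑ x ∈ S, f x) (∑ x ∈ S, g x) := by
  classical
  induction S using Finset.induction_on with
  | empty => simpa using hr.refl 0
  | insert a S ha ih =>
    rw [Finset.sum_insert ha, Finset.sum_insert ha]
    exact hr.add (h a (Finset.mem_insert_self a S)) (ih fun x hx => h x (Finset.mem_insert_of_mem hx))

theorem csup (hr : IsEstimator r) {K L : ℕ → M} (hK : Monotone K) (hL : Monotone L)
    (h : ∀ n, r (K n) (L n)) : r (FlowMonoid.csup K) (FlowMonoid.csup L) :=
  hr.2.2.2.1 K L hK hL h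

theorem map (hr : IsEstimator r) {f : M → M} (hf : FMCont f) {m n : M} (h : r m n) :
    r (f m) (f n) :=
  hr.2.2.2.2 f hf m n h

end IsEstimator

theorem isEstimator_le : IsEstimator ((· ≤ ·) : M → M → Prop) :=
  ⟨le_refl, fun _ _ _ => le_trans, fun _ _ _ h => add_le_add h le_rfl,
    fun _ _ hK hL h => csup_mono hK hL h, fun _ hf _ _ h => hf.monotone h⟩

namespace FlowGraph

variable {r : M → M → Prop} {h a b : FlowGraph M} {i j : ℕ → ℕ → M} {c d : ℕ → M} {x y : ℕ}

theorem inflow_eq_zero_of_mem (h : FlowGraph M) (hy : y ∈ h.X) (x : ℕ) :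
    h.inflow y x = 0 :=
  by_contra fun hne => (h.inflow_dom y x hne).1 hy

theorem stepWith_of_mem (hx : x ∈ h.X) :
    h.stepWith i c x = (∑ᶠ y, i y x) + ∑ y ∈ h.X, h.E y x (c y) :=
  if_pos hx

theorem stepWith_of_notMem (hx : x ∉ h.X) : h.stepWith i c x = 0 :=
  if_neg hx

theorem stepWith_congr (hij : ∀ y, i y x = j y x) (hcd : ∀ y ∈ h.X, c y = d y) :
    h.stepWith i c x = h.stepWith j d x := by
  by_cases hx : x ∈ h.X
  · rw [stepWith_of_mem hx, stepWith_of_mem hx, finsum_congr hij,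
      Finset.sum_congr rfl fun y hy => by rw [hcd y hy]]
  · rw [stepWith_of_notMem hx, stepWith_of_notMem hx]

theorem rel_stepWith (hr : IsEstimator r) (hij : x ∈ h.X → r (∑ᶠ y, i y x) (∑ᶠ y, j y x))
    (hcd : ∀ y ∈ h.X, r (c y) (d y)) : r (h.stepWith i c x) (h.stepWith j d x) := by
  by_cases hx : x ∈ h.X
  · rw [stepWith_of_mem hx, stepWith_of_mem hx]
    exact hr.add (hij hx) (hr.sum _ fun y hy => hr.map (h.econt y x hy) (hcd y hy))
  · rw [stepWith_of_notMem hx, stepWith_of_notMem hx]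
    exact hr.refl 0

theorem stepWith_mono (hcd : ∀ y ∈ h.X, c y ≤ d y) : h.stepWith i c x ≤ h.stepWith i d x :=
  rel_stepWith isEstimator_le (fun _ => le_rfl) hcd

theorem stepWith_csup {c : ℕ → ℕ → M} (hc : Monotone c) (x : ℕ) :
    h.stepWith i (fun y => csup fun n => c n y) x = csup fun n => h.stepWith i (c n) x := by
  by_cases hx : x ∈ h.X
  · have hE : ∀ y ∈ h.X, Monotone fun n => h.E y x (c n y) :=
      fun y hy _ _ hnm => (h.econt y x hy).monotone (hc hnm y)
    simp only [stepWith_of_mem hx]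
    rw [Finset.sum_congr rfl fun y hy => (h.econt y x hy).map_csup fun _ _ hnm => hc hnm y,
      sum_csup _ _ hE, add_csup _ _ fun _ _ hnm => Finset.sum_le_sum fun y hy => hE y hy hnm]
  · simp only [stepWith_of_notMem hx, csup_const]

theorem iterate_stepWith_succ (n : ℕ) (x : ℕ) :
    (h.stepWith i)^[n + 1] (fun _ => 0) x = h.stepWith i ((h.stepWith i)^[n] fun _ => 0) x := by
  rw [Function.iterate_succ_apply']

theorem monotone_iterate_stepWith : Monotone fun n => (h.stepWith i)^[n] fun _ => 0 := by
  refine monotone_nat_of_le_succ fun n => ?_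
  induction n with
  | zero => exact fun _ => zero_le
  | succ n ih =>
    intro x
    rw [iterate_stepWith_succ, iterate_stepWith_succ (n + 1)]
    exact stepWith_mono fun y _ => ih y

theorem stepWith_flowWith (x : ℕ) : h.stepWith i (h.flowWith i) x = h.flowWith i x := by
  unfold flowWith
  rw [stepWith_csup monotone_iterate_stepWith]
  simp only [← Function.iterate_succ_apply' (h.stepWith i)]
  exact csup_succ fun _ _ hnm => monotone_iterate_stepWith hnm x

theorem flowWith_le_of_stepWith_le (hc : ∀ x, h.stepWith i c x ≤ c x) (x : ℕ) :
    h.flowWith i x ≤ c x := by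
  refine csup_le (fun _ _ hnm => monotone_iterate_stepWith hnm x) fun n => ?_
  induction n generalizing x with
  | zero => exact zero_le
  | succ n ih =>
    dsimp only
    rw [iterate_stepWith_succ]
    exact (stepWith_mono fun y _ => ih y).trans (hc x)

theorem rel_flowWith (hr : IsEstimator r) (hij : ∀ x ∈ h.X, r (∑ᶠ y, i y x) (∑ᶠ y, j y x))
    (x : ℕ) : r (h.flowWith i x) (h.flowWith j x) := by
  refine hr.csup (fun _ _ hnm => monotone_iterate_stepWith hnm x)
    (fun _ _ hnm => monotone_iterate_stepWith hnm x) fun n => ?_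
  induction n generalizing x with
  | zero => exact hr.refl 0
  | succ n ih =>
    rw [iterate_stepWith_succ, iterate_stepWith_succ]
    exact rel_stepWith hr (hij x) fun y _ => ih y

theorem flowWith_mono (hij : ∀ x ∈ h.X, ∑ᶠ y, i y x ≤ ∑ᶠ y, j y x) (x : ℕ) :
    h.flowWith i x ≤ h.flowWith j x :=
  rel_flowWith isEstimator_le hij x

theorem flowWith_congr (hij : ∀ x ∈ h.X, ∀ y, i y x = j y x) : h.flowWith i = h.flowWith j :=
  funext fun x => le_antisymm (flowWith_mono (fun x hx => (finsum_congr (hij x hx)).le) x)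
    (flowWith_mono (fun x hx => (finsum_congr (hij x hx)).ge) x)

structure IsExternalInflow (X : Finset ℕ) (i : ℕ → ℕ → M) : Prop where
  finite_support : ∀ x, (Function.support fun y => i y x).Finite
  eq_zero : ∀ y ∈ X, ∀ x, i y x = 0

theorem IsExternalInflow.mono {X Y : Finset ℕ} (hi : IsExternalInflow X i) (hYX : Y ⊆ X) :
    IsExternalInflow Y i :=
  ⟨hi.finite_support, fun y hy => hi.eq_zero y (hYX hy)⟩

theorem IsExternalInflow.left {X Y : Finset ℕ} (hi : IsExternalInflow (X ∪ Y) i) :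
    IsExternalInflow X i :=
  hi.mono Finset.subset_union_left

theorem IsExternalInflow.right {X Y : Finset ℕ} (hi : IsExternalInflow (X ∪ Y) i) :
    IsExternalInflow Y i :=
  hi.mono Finset.subset_union_right

theorem IsExternalInflow.of_le {h : FlowGraph M} (hi : ∀ y x, i y x ≤ h.inflow y x) :
    IsExternalInflow h.X i where
  finite_support x := (h.inflow_fin x).subset fun y hy hy0 => hy (le_zero_iff.1 (hy0 ▸ hi y x))
  eq_zero y hy x := le_zero_iff.1 (h.inflow_eq_zero_of_mem hy x ▸ hi y x)

theorem IsExternalInflow.of_le_gmul {a b : FlowGraph M}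
    (hi : ∀ y x, i y x ≤ (gmul a b).inflow y x) : IsExternalInflow (a.X ∪ b.X) i :=
  of_le hi

theorem flowWith_le_flow (hi : ∀ y x, i y x ≤ h.inflow y x) (x : ℕ) :
    h.flowWith i x ≤ h.flow x :=
  flowWith_mono (fun z _ => finsum_le_finsum' ((IsExternalInflow.of_le hi).finite_support z)
    (h.inflow_fin z) fun y => hi y z) x

theorem tf_congr (hij : ∀ x ∈ h.X, ∀ y, i y x = j y x) : h.tf i = h.tf j := by
  unfold tf
  rw [flowWith_congr hij]

theorem rel_tf (hr : IsEstimator r) (hij : ∀ x ∈ h.X, r (∑ᶠ y, i y x) (∑ᶠ y, j y x))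
    (y : ℕ) : r (h.tf i y) (h.tf j y) :=
  hr.sum _ fun x hx => hr.map (h.econt x y hx) (rel_flowWith hr hij x)

def boundaryInflow (b : FlowGraph M) (i : ℕ → ℕ → M) (c : ℕ → M) : ℕ → ℕ → M :=
  fun y x => if y ∈ b.X then b.E y x (c y) else i y x

theorem boundaryInflow_congr (hcd : ∀ y ∈ b.X, c y = d y) :
    b.boundaryInflow i c = b.boundaryInflow i d := by
  funext y x
  by_cases hy : y ∈ b.X <;> simp [boundaryInflow, hy, hcd]

theorem finsum_boundaryInflow (hi : IsExternalInflow b.X i) (x : ℕ) :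
    ∑ᶠ y, b.boundaryInflow i c y x = (∑ᶠ y, i y x) + ∑ y ∈ b.X, b.E y x (c y) := by
  have hsplit : (fun y => b.boundaryInflow i c y x)
      = fun y => i y x + if y ∈ b.X then b.E y x (c y) else 0 := by
    funext y
    by_cases hy : y ∈ b.X <;> simp [boundaryInflow, hy, hi.eq_zero]
  have hsupp : (Function.support fun y => if y ∈ b.X then b.E y x (c y) else 0) ⊆ b.X :=
    fun y hy => by_contra fun hyb => hy (if_neg hyb)
  rw [hsplit, finsum_add_distrib (hi.finite_support x) (b.X.finite_toSet.subset hsupp),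
    finsum_eq_sum_of_support_subset _ hsupp, Finset.sum_ite_mem, Finset.inter_self]

theorem rel_finsum_boundaryInflow (hr : IsEstimator r) {b' : FlowGraph M}
    (hb : IsExternalInflow b.X i) (hb' : IsExternalInflow b'.X i)
    (hcd : r (∑ y ∈ b.X, b.E y x (c y)) (∑ y ∈ b'.X, b'.E y x (d y))) :
    r (∑ᶠ y, b.boundaryInflow i c y x) (∑ᶠ y, b'.boundaryInflow i d y x) := by
  rw [finsum_boundaryInflow hb, finsum_boundaryInflow hb']
  exact hr.add (hr.refl _) hcd

theorem finsum_boundaryInflow_mono (hi : IsExternalInflow b.X i) (hcd : ∀ y ∈ b.X, c y ≤ d y)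
    (x : ℕ) : ∑ᶠ y, b.boundaryInflow i c y x ≤ ∑ᶠ y, b.boundaryInflow i d y x :=
  rel_finsum_boundaryInflow isEstimator_le hi hi
    (Finset.sum_le_sum fun y hy => (b.econt y x hy).monotone (hcd y hy))

theorem gmul_comm (hd : Disjoint a.X b.X) : gmul a b = gmul b a := by
  ext x
  · simp [gmul, or_comm]
  · by_cases ha : x ∈ a.X
    · simp [gmul, ha, Finset.disjoint_left.1 hd ha]
    · by_cases hb : x ∈ b.X
      · simp [gmul, ha, hb]
      · simp [gmul, ha, hb, a.edom x _ ha, b.edom x _ hb]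
  · simp [gmul, Finset.union_comm, add_comm]

theorem gmul_inflow_of_mem_left (hd : Disjoint a.X b.X) (hx : x ∈ a.X) (hy : y ∉ b.X) :
    (gmul a b).inflow y x = a.inflow y x := by
  have hb : b.inflow y x = 0 := by_contra fun hne =>
    Finset.disjoint_left.1 hd hx (b.inflow_dom y x hne).2
  by_cases hya : y ∈ a.X
  · simp [gmul, hya, a.inflow_eq_zero_of_mem hya]
  · simp [gmul, hya, hy, hb]

theorem sum_gmul_E (hd : Disjoint a.X b.X) (x : ℕ) (c : ℕ → M) :
    ∑ y ∈ (gmul a b).X, (gmul a b).E y x (c y)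
      = ∑ y ∈ a.X, a.E y x (c y) + ∑ y ∈ b.X, b.E y x (c y) := by
  rw [show (gmul a b).X = a.X ∪ b.X from rfl, Finset.sum_union hd]
  congr 1
  · exact Finset.sum_congr rfl fun y hy => by simp [gmul, hy]
  · exact Finset.sum_congr rfl fun y hy => by simp [gmul, Finset.disjoint_right.1 hd hy]

theorem stepWith_gmul_of_mem_left (hd : Disjoint a.X b.X) (hi : IsExternalInflow b.X i)
    (hx : x ∈ a.X) : (gmul a b).stepWith i c x = a.stepWith (b.boundaryInflow i c) c x := by
  rw [stepWith_of_mem (Finset.mem_union_left _ hx), stepWith_of_mem hx, sum_gmul_E hd,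
    finsum_boundaryInflow hi, add_comm (∑ y ∈ a.X, _), add_assoc]

theorem stepWith_gmul_of_mem_right (hd : Disjoint a.X b.X) (hi : IsExternalInflow a.X i)
    (hx : x ∈ b.X) : (gmul a b).stepWith i c x = b.stepWith (a.boundaryInflow i c) c x := by
  rw [gmul_comm hd]
  exact stepWith_gmul_of_mem_left hd.symm hi hx

theorem flowWith_gmul_of_mem_left (hd : Disjoint a.X b.X) (hi : IsExternalInflow b.X i)
    (hx : x ∈ a.X) :
    (gmul a b).flowWith i x = a.flowWith (b.boundaryInflow i ((gmul a b).flowWith i)) x := by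
  set F := (gmul a b).flowWith i
  set A := a.flowWith (b.boundaryInflow i F)
  have hAF : ∀ z, A z ≤ F z := flowWith_le_of_stepWith_le fun z => by
    by_cases hz : z ∈ a.X
    · rw [← stepWith_gmul_of_mem_left hd hi hz, stepWith_flowWith]
    · rw [stepWith_of_notMem hz]
      exact zero_le
  refine le_antisymm ?_ (hAF x)
  let c : ℕ → M := fun z => if z ∈ a.X then A z else F z
  have hcF : ∀ z, c z ≤ F z := fun z => by by_cases hz : z ∈ a.X <;> simp [c, hz, hAF z]
  have hc : ∀ z, (gmul a b).stepWith i c z ≤ c z := fun z => by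
    by_cases hz : z ∈ a.X
    · have hbc : b.boundaryInflow i c = b.boundaryInflow i F :=
        boundaryInflow_congr fun y hy => if_neg (Finset.disjoint_right.1 hd hy)
      rw [stepWith_gmul_of_mem_left hd hi hz, hbc,
        stepWith_congr (d := A) (fun _ => rfl) fun y hy => if_pos hy, stepWith_flowWith]
      exact (if_pos hz).ge
    · calc _ ≤ (gmul a b).stepWith i F z := stepWith_mono fun y _ => hcF y
        _ = c z := (stepWith_flowWith z).trans (if_neg hz).symm
  simpa [c, hx] using flowWith_le_of_stepWith_le hc x

theorem flowWith_gmul_of_mem_right (hd : Disjoint a.X b.X) (hi : IsExternalInflow a.X i)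
    (hx : x ∈ b.X) :
    (gmul a b).flowWith i x = b.flowWith (a.boundaryInflow i ((gmul a b).flowWith i)) x := by
  rw [gmul_comm hd]
  exact flowWith_gmul_of_mem_left hd.symm hi hx

theorem tf_gmul (hd : Disjoint a.X b.X) (i : ℕ → ℕ → M) (y : ℕ) :
    (gmul a b).tf i y = ∑ x ∈ a.X, a.E x y ((gmul a b).flowWith i x)
      + ∑ x ∈ b.X, b.E x y ((gmul a b).flowWith i x) :=
  sum_gmul_E hd y _

theorem tf_boundaryInflow_gmul (hd : Disjoint a.X b.X) (hi : IsExternalInflow b.X i) (y : ℕ) :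
    a.tf (b.boundaryInflow i ((gmul a b).flowWith i)) y
      = ∑ x ∈ a.X, a.E x y ((gmul a b).flowWith i x) :=
  Finset.sum_congr rfl fun x hx => by rw [flowWith_gmul_of_mem_left hd hi hx]

noncomputable def gaussSeidelStep (a b : FlowGraph M) (i : ℕ → ℕ → M) (c : ℕ → M) : ℕ → M :=
  fun x => if x ∈ a.X then a.flowWith (b.boundaryInflow i c) x
    else b.flowWith (a.boundaryInflow i (a.flowWith (b.boundaryInflow i c))) x

noncomputable def gaussSeidel (a b : FlowGraph M) (i : ℕ → ℕ → M) (n : ℕ) : ℕ → M :=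
  (gaussSeidelStep a b i)^[n] fun _ => 0

theorem gaussSeidel_succ (n : ℕ) :
    gaussSeidel a b i (n + 1) = gaussSeidelStep a b i (gaussSeidel a b i n) :=
  Function.iterate_succ_apply' _ _ _

theorem gaussSeidelStep_mono (hi : IsExternalInflow (a.X ∪ b.X) i) (hcd : ∀ y ∈ b.X, c y ≤ d y)
    (x : ℕ) : gaussSeidelStep a b i c x ≤ gaussSeidelStep a b i d x := by
  have hA : ∀ z, a.flowWith (b.boundaryInflow i c) z ≤ a.flowWith (b.boundaryInflow i d) z :=
    flowWith_mono fun z _ => finsum_boundaryInflow_mono hi.right hcd z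
  unfold gaussSeidelStep
  split_ifs
  · exact hA x
  · exact flowWith_mono (fun z _ => finsum_boundaryInflow_mono hi.left (fun y _ => hA y) z) x

theorem monotone_gaussSeidel (hi : IsExternalInflow (a.X ∪ b.X) i) :
    Monotone (gaussSeidel a b i) := by
  refine monotone_nat_of_le_succ fun n => ?_
  induction n with
  | zero => exact fun _ => zero_le
  | succ n ih =>
    have h := gaussSeidelStep_mono hi fun y _ => ih y
    rwa [← gaussSeidel_succ, ← gaussSeidel_succ] at h

theorem gaussSeidelStep_flowWith (hd : Disjoint a.X b.X) (hi : IsExternalInflow (a.X ∪ b.X) i)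
    (hx : x ∈ b.X) : gaussSeidelStep a b i ((gmul a b).flowWith i) x = (gmul a b).flowWith i x := by
  have hA : ∀ y ∈ a.X, a.flowWith (b.boundaryInflow i ((gmul a b).flowWith i)) y
      = (gmul a b).flowWith i y :=
    fun y hy => (flowWith_gmul_of_mem_left hd hi.right hy).symm
  rw [gaussSeidelStep, if_neg (Finset.disjoint_right.1 hd hx), boundaryInflow_congr hA,
    ← flowWith_gmul_of_mem_right hd hi.left hx]

theorem gaussSeidel_le_flowWith (hd : Disjoint a.X b.X) (hi : IsExternalInflow (a.X ∪ b.X) i)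
    (n : ℕ) (hx : x ∈ b.X) : gaussSeidel a b i n x ≤ (gmul a b).flowWith i x := by
  induction n generalizing x with
  | zero => exact zero_le
  | succ n ih =>
    rw [gaussSeidel_succ, ← gaussSeidelStep_flowWith hd hi hx]
    exact gaussSeidelStep_mono hi (fun y hy => ih hy) x

theorem stepWith_gaussSeidel_le (hd : Disjoint a.X b.X) (hi : IsExternalInflow (a.X ∪ b.X) i)
    (n x : ℕ) :
    (gmul a b).stepWith i (gaussSeidel a b i n) x ≤ gaussSeidel a b i (n + 1) x := by
  set C := gaussSeidel a b i n
  set A := a.flowWith (b.boundaryInflow i C)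
  set A' := b.flowWith (a.boundaryInflow i A)
  have hsucc : ∀ y, gaussSeidel a b i (n + 1) y = if y ∈ a.X then A y else A' y :=
    fun y => by rw [gaussSeidel_succ]; rfl
  have hC : ∀ y, C y ≤ gaussSeidel a b i (n + 1) y := monotone_gaussSeidel hi n.le_succ
  by_cases hxa : x ∈ a.X
  · calc (gmul a b).stepWith i C x = a.stepWith (b.boundaryInflow i C) C x :=
          stepWith_gmul_of_mem_left hd hi.right hxa
      _ ≤ a.stepWith (b.boundaryInflow i C) A x :=
          stepWith_mono fun y hy => by simpa [hsucc, hy] using hC y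
      _ = gaussSeidel a b i (n + 1) x := by rw [stepWith_flowWith, hsucc, if_pos hxa]
  by_cases hxb : x ∈ b.X
  · -- the sweep solves `b` against the already updated flow of `a`
    calc (gmul a b).stepWith i C x
        ≤ (gmul a b).stepWith i (gaussSeidel a b i (n + 1)) x := stepWith_mono fun y _ => hC y
      _ = b.stepWith (a.boundaryInflow i A) A' x := by
          rw [stepWith_gmul_of_mem_right hd hi.left hxb,
            boundaryInflow_congr fun y hy => by rw [hsucc, if_pos hy]]
          exact stepWith_congr (fun _ => rfl) fun y hy => by
            rw [hsucc, if_neg (Finset.disjoint_right.1 hd hy)]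
      _ = gaussSeidel a b i (n + 1) x := by rw [stepWith_flowWith, hsucc, if_neg hxa]
  rw [stepWith_of_notMem fun h => (Finset.mem_union.1 h).elim hxa hxb]
  exact zero_le

theorem csup_gaussSeidel (hd : Disjoint a.X b.X) (hi : IsExternalInflow (a.X ∪ b.X) i)
    (hx : x ∈ b.X) : csup (fun n => gaussSeidel a b i n x) = (gmul a b).flowWith i x := by
  have hmono := monotone_gaussSeidel hi
  refine le_antisymm (csup_le (fun _ _ h => hmono h x) fun n => gaussSeidel_le_flowWith hd hi n hx)
    (flowWith_le_of_stepWith_le (c := fun y => csup fun n => gaussSeidel a b i n y) (fun z => ?_) x)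
  rw [stepWith_csup hmono]
  exact csup_le (fun _ _ h => stepWith_mono fun y _ => hmono h y) fun n =>
    (stepWith_gaussSeidel_le hd hi n z).trans (le_csup (fun _ _ h => hmono h z) (n + 1))

noncomputable def component (a b : FlowGraph M) (hd : Disjoint a.X b.X) : FlowGraph M where
  X := a.X
  E := a.E
  inflow y x := if y ∈ b.X ∧ x ∈ a.X then b.E y x ((gmul a b).flow y) else a.inflow y x
  econt := a.econt
  edom := a.edom
  inflow_fin x := (b.X.finite_toSet.union (a.inflow_fin x)).subset fun y hy => by
    by_cases hyb : y ∈ b.X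
    · exact Or.inl hyb
    · exact Or.inr (by simpa [hyb] using hy)
  inflow_dom y x hne := by
    by_cases hyx : y ∈ b.X ∧ x ∈ a.X
    · exact ⟨Finset.disjoint_right.1 hd hyx.1, hyx.2⟩
    · exact a.inflow_dom y x (by simpa [hyx] using hne)

variable {hd : Disjoint a.X b.X}

theorem component_inflow_of_notMem (hy : y ∉ b.X) (x : ℕ) :
    (component a b hd).inflow y x = a.inflow y x := by
  simp [component, hy]

theorem component_inflow_of_mem (hy : y ∈ b.X) (hx : x ∈ a.X) :
    (component a b hd).inflow y x = b.E y x ((gmul a b).flow y) := by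
  simp [component, hy, hx]

theorem flow_component (hx : x ∈ a.X) : (component a b hd).flow x = (gmul a b).flow x := by
  refine (congrFun (flowWith_congr (h := a) fun z hz y => ?_) x).trans
    (flowWith_gmul_of_mem_left hd (IsExternalInflow.of_le_gmul fun _ _ => le_rfl).right hx).symm
  by_cases hy : y ∈ b.X
  · simp [component, boundaryInflow, hy, hz, flow]
  · simp [component, boundaryInflow, hy, gmul_inflow_of_mem_left hd hz hy]

theorem gmul_component : gmul (component a b hd) (component b a hd.symm) = gmul a b := by
  ext y x
  · rfl
  · rfl
  · show (if y ∈ a.X ∪ b.X then 0 else _) = if y ∈ a.X ∪ b.X then 0 else _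
    split_ifs with hy
    · rfl
    · rw [Finset.mem_union, not_or] at hy
      rw [component_inflow_of_notMem hy.2, component_inflow_of_notMem hy.1]

theorem mdef_component : MDef (component a b hd) (component b a hd.symm) := by
  have hflow_b : ∀ y ∈ b.X, (component b a hd.symm).flow y = (gmul a b).flow y := fun y hy => by
    rw [flow_component hy, gmul_comm hd.symm]
  refine ⟨hd, fun x (hx : x ∈ a.X) y (hy : y ∈ b.X) => ⟨?_, ?_⟩, fun x (hx : x ∈ a.X) => ?_,
    fun y (hy : y ∈ b.X) => ?_⟩
  · rw [out, flow_component hx, component_inflow_of_mem hx hy, gmul_comm hd.symm]; rfl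
  · rw [out, hflow_b y hy, component_inflow_of_mem hy hx]; rfl
  · rw [gmul_component, flow_component hx]
  · rw [gmul_component, hflow_b y hy]

end FlowGraph

namespace FlowGraph.MDef

variable {s u : FlowGraph M} {i : ℕ → ℕ → M} {c : ℕ → M} {x y : ℕ}

theorem inflow_eq_outflow_right (hsu : MDef s u) (hy : y ∈ u.X) (hx : x ∈ s.X) :
    s.inflow y x = u.E y x ((gmul s u).flow y) := by
  rw [← (hsu.2.1 x hx y hy).2, out, hsu.2.2.2 y hy]

theorem inflow_eq_outflow_left (hsu : MDef s u) (hy : y ∈ s.X) (hx : x ∈ u.X) :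
    u.inflow y x = s.E y x ((gmul s u).flow y) := by
  rw [← (hsu.2.1 y hy x hx).1, out, hsu.2.2.1 y hy]

theorem boundaryInflow_le_inflow (hsu : MDef s u) (hi : ∀ y x, i y x ≤ (gmul s u).inflow y x)
    (hc : ∀ y ∈ u.X, c y ≤ (gmul s u).flow y) (y : ℕ) (hx : x ∈ s.X) :
    u.boundaryInflow i c y x ≤ s.inflow y x := by
  by_cases hy : y ∈ u.X
  · rw [hsu.inflow_eq_outflow_right hy hx, boundaryInflow, if_pos hy]
    exact (u.econt y x hy).monotone (hc y hy)
  · rw [← gmul_inflow_of_mem_left hsu.1 hx hy, boundaryInflow, if_neg hy]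
    exact hi y x

end FlowGraph.MDef

namespace ctxLe

open FlowGraph

variable {r : M → M → Prop} {s t u : FlowGraph M} {i j : ℕ → ℕ → M}

theorem gmul_inflow (hst : ctxLe r s t) : (gmul s u).inflow = (gmul t u).inflow := by
  show (fun y x => if y ∈ s.X ∪ u.X then 0 else s.inflow y x + u.inflow y x)
    = fun y x => if y ∈ t.X ∪ u.X then 0 else t.inflow y x + u.inflow y x
  rw [hst.1, hst.2.1]

theorem rel_tf_of_le (hst : ctxLe r s t) (hj : ∀ y, ∀ x ∈ s.X, j y x ≤ s.inflow y x) {y : ℕ}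
    (hy : y ∉ s.X) : r (s.tf j y) (t.tf j y) := by
  -- `tf` ignores the inflow into targets outside `s.X`, where `s.in` vanishes
  let j' : ℕ → ℕ → M := fun y x => if x ∈ s.X then j y x else 0
  have hjj' : ∀ x ∈ s.X, ∀ y, j y x = j' y x := fun x hx y => (if_pos hx).symm
  rw [tf_congr (h := s) hjj', tf_congr (h := t) fun x hx => hjj' x (hst.1 ▸ hx)]
  refine hst.2.2 j' (fun y x => ?_) y hy
  by_cases hx : x ∈ s.X
  · simpa [j', hx] using hj y x hx
  · simp [j', hx]

theorem rel_tf_boundaryInflow (hr : IsEstimator r) (hst : ctxLe r s t) (hsu : MDef s u)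
    (hi : ∀ y x, i y x ≤ (gmul s u).inflow y x) {c d : ℕ → M}
    (hc : ∀ x ∈ u.X, c x ≤ (gmul s u).flow x) (hcd : ∀ x ∈ u.X, r (c x) (d x)) {y : ℕ}
    (hy : y ∉ s.X) : r (s.tf (u.boundaryInflow i c) y) (t.tf (u.boundaryInflow i d) y) :=
  have hiu : IsExternalInflow u.X i := (IsExternalInflow.of_le_gmul hi).right
  hr.trans (hst.rel_tf_of_le (fun z _ hx => hsu.boundaryInflow_le_inflow hi hc z hx) hy)
    (rel_tf hr (fun z _ => rel_finsum_boundaryInflow hr hiu hiu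
      (hr.sum _ fun x hx => hr.map (u.econt x z hx) (hcd x hx))) y)

theorem rel_flowWith_gmul (hr : IsEstimator r) (hst : ctxLe r s t) (hsu : MDef s u)
    (hi : ∀ y x, i y x ≤ (gmul s u).inflow y x) {x : ℕ} (hx : x ∈ u.X) :
    r ((gmul s u).flowWith i x) ((gmul t u).flowWith i x) := by
  have hd : Disjoint t.X u.X := hst.1 ▸ hsu.1
  have his : IsExternalInflow (s.X ∪ u.X) i := .of_le_gmul hi
  have hit : IsExternalInflow (t.X ∪ u.X) i := hst.1 ▸ his
  have hchain : ∀ n, ∀ x ∈ u.X, r (gaussSeidel s u i n x) (gaussSeidel t u i n x) := by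
    intro n
    induction n with
    | zero => exact fun x _ => hr.refl 0
    | succ n ih =>
      intro x hx
      rw [gaussSeidel_succ, gaussSeidel_succ, gaussSeidelStep, gaussSeidelStep,
        if_neg (Finset.disjoint_right.1 hsu.1 hx), if_neg (Finset.disjoint_right.1 hd hx)]
      refine rel_flowWith hr (fun z hz => rel_finsum_boundaryInflow hr his.left hit.left ?_) x
      exact hst.rel_tf_boundaryInflow hr hsu hi
        (fun y hy => (gaussSeidel_le_flowWith hsu.1 his n hy).trans (flowWith_le_flow hi y)) ih
        (Finset.disjoint_right.1 hsu.1 hz)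
  rw [← csup_gaussSeidel hsu.1 his hx, ← csup_gaussSeidel hd hit hx]
  exact hr.csup (fun _ _ h => monotone_gaussSeidel his h x)
    (fun _ _ h => monotone_gaussSeidel hit h x) fun n => hchain n x hx

theorem rel_sum_outflow_gmul (hr : IsEstimator r) (hst : ctxLe r s t) (hsu : MDef s u)
    (hi : ∀ y x, i y x ≤ (gmul s u).inflow y x) {y : ℕ} (hy : y ∉ s.X) :
    r (∑ x ∈ s.X, s.E x y ((gmul s u).flowWith i x))
      (∑ x ∈ t.X, t.E x y ((gmul t u).flowWith i x)) := by
  have hd : Disjoint t.X u.X := hst.1 ▸ hsu.1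
  have his : IsExternalInflow (s.X ∪ u.X) i := .of_le_gmul hi
  have hit : IsExternalInflow (t.X ∪ u.X) i := hst.1 ▸ his
  rw [← tf_boundaryInflow_gmul hsu.1 his.right, ← tf_boundaryInflow_gmul hd hit.right]
  exact hst.rel_tf_boundaryInflow hr hsu hi (fun x _ => flowWith_le_flow hi x)
    (fun x hx => hst.rel_flowWith_gmul hr hsu hi hx) hy

theorem gmul_right (hr : IsEstimator r) (hst : ctxLe r s t) (hsu : MDef s u) :
    ctxLe r (gmul s u) (gmul t u) := by
  have hd : Disjoint t.X u.X := hst.1 ▸ hsu.1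
  refine ⟨show s.X ∪ u.X = t.X ∪ u.X by rw [hst.1], hst.gmul_inflow, fun i hi y hy => ?_⟩
  rw [tf_gmul hsu.1, tf_gmul hd]
  exact hr.add (hst.rel_sum_outflow_gmul hr hsu hi fun h => hy (Finset.mem_union_left _ h))
    (hr.sum _ fun x hx => hr.map (u.econt x y hx) (hst.rel_flowWith_gmul hr hsu hi hx))

theorem inflowLe_component_left (hr : IsEstimator r) (hst : ctxLe r s t) (hsu : MDef s u)
    (hd : Disjoint t.X u.X) : inflowLe r u.X t.X s.inflow (component t u hd).inflow := by
  have hFt : (gmul t u).flow = (gmul t u).flowWith (gmul s u).inflow := by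
    rw [hst.gmul_inflow]; rfl
  refine ⟨fun y hy x => by rw [component_inflow_of_notMem hy, hst.2.1], fun x hx => ?_⟩
  rw [Finset.sum_congr rfl fun y hy => hsu.inflow_eq_outflow_right hy (hst.1 ▸ hx),
    Finset.sum_congr rfl fun y hy => component_inflow_of_mem hy hx, hFt]
  exact hr.sum _ fun y hy =>
    hr.map (u.econt y x hy) (hst.rel_flowWith_gmul hr hsu (fun _ _ => le_rfl) hy)

theorem inflowLe_component_right (hr : IsEstimator r) (hst : ctxLe r s t) (hsu : MDef s u)
    (hd : Disjoint t.X u.X) : inflowLe r s.X u.X u.inflow (component u t hd.symm).inflow := by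
  have hFt : (gmul t u).flow = (gmul t u).flowWith (gmul s u).inflow := by
    rw [hst.gmul_inflow]; rfl
  refine ⟨fun y hy x => (component_inflow_of_notMem (hst.1 ▸ hy) x).symm, fun x hx => ?_⟩
  rw [Finset.sum_congr rfl fun y hy => hsu.inflow_eq_outflow_left hy hx,
    Finset.sum_congr hst.1 fun y hy => component_inflow_of_mem hy hx, gmul_comm hd.symm, hFt]
  exact hst.rel_sum_outflow_gmul hr hsu (fun _ _ => le_rfl) (Finset.disjoint_right.1 hsu.1 hx)

end ctxLe

open FlowGraph in
/-- Shape-independent fixed-point approximation. Let `⪯` be an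
estimator, `s ⪯ctx t`, and `s ⋆ u` defined. Then there are inflows `in_t`,
`in_u` with `s.in ⪯^{u.X} in_t` and `u.in ⪯^{s.X} in_u` such that
`t ⌢ u = t[in_t] ⋆ u[in_u]` (the multiplication on the right being defined)
and `s ⋆ u ⪯ctx t ⌢ u`. -/
theorem shape_independent_fixed_point_approximation (r : M → M → Prop)
    (hr : IsEstimator r) (s t u : FlowGraph M)
    (hst : ctxLe r s t) (hsu : MDef s u) :
    ∃ t' u' : FlowGraph M,
      -- `t' = t[in_t]` with `s.in ⪯^{u.X} in_t`
      t'.X = t.X ∧ t'.E = t.E ∧ inflowLe r u.X t.X s.inflow t'.inflow ∧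
      -- `u' = u[in_u]` with `u.in ⪯^{s.X} in_u`
      u'.X = u.X ∧ u'.E = u.E ∧ inflowLe r s.X u.X u.inflow u'.inflow ∧
      -- `t ⌢ u = t[in_t] ⋆ u[in_u]`, the multiplication being defined
      MDef t' u' ∧ gmul t' u' = gmul t u ∧
      -- `s ⋆ u ⪯ctx t ⌢ u`
      ctxLe r (gmul s u) (gmul t u) := by
  have hd : Disjoint t.X u.X := hst.1 ▸ hsu.1
  exact ⟨component t u hd, component u t hd.symm, rfl, rfl, hst.inflowLe_component_left hr hsu hd,
    rfl, rfl, hst.inflowLe_component_right hr hsu hd, mdef_component, gmul_component,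
    hst.gmul_right hr hsu⟩
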